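/- arXiv:1309.7719 — 2 statements merged into one kernel-verified Lean document; each statement's English description precedes it below -/
import Mathlib

section
/- With the notation of the matroid MI_n: each set Cᵢ (i = 1, 2, 3) is a circuit of MI_n, i.e., Cᵢ is dependent and every proper subset of Cᵢ is independent. -/
open Finset

/-- The ground set `E_n = {1,2,3,4} ∪ X ∪ Y ∪ Z`: the four special points are `Sum.inl 0, …,
Sum.inl 3` (standing for `1,2,3,4`), and `Sum.inr (k, j)` is the `j`-th element of `X`, `Y`, `Z`
for `k = 0, 1, 2` respectively. -/
abbrev MIElt (n : ℕ) := Fin 4 ⊕ (Fin 3 × Fin (n + 1))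

/-- `MIXYZ n 0 = X`, `MIXYZ n 1 = Y`, `MIXYZ n 2 = Z`. -/
def MIXYZ (n : ℕ) (k : Fin 3) : Finset (MIElt n) :=
  (Finset.univ : Finset (Fin (n + 1))).image fun j => Sum.inr (k, j)

/-- `H₁ = {1} ∪ Y ∪ Z`, `H₂ = {2} ∪ X ∪ Z`, `H₃ = {3} ∪ X ∪ Y` (indices shifted to `0,1,2`). -/
def MIH (n : ℕ) (i : Fin 3) : Finset (MIElt n) :=
  insert (Sum.inl i.castSucc) (MIXYZ n (i + 1) ∪ MIXYZ n (i + 2))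

/-- `C₁ = {1,4} ∪ X`, `C₂ = {2,4} ∪ Y`, `C₃ = {3,4} ∪ Z` (indices shifted to `0,1,2`). -/
def MIC (n : ℕ) (i : Fin 3) : Finset (MIElt n) :=
  insert (Sum.inl i.castSucc) (insert (Sum.inl 3) (MIXYZ n i))

/-- The set `{1,2,3}` of special points. -/
def MIT (n : ℕ) : Finset (MIElt n) := {Sum.inl 0, Sum.inl 1, Sum.inl 2}

/-- The collection `B_n` of bases of the matroid `MI_n`. -/
def MIBases (n : ℕ) (B : Finset (MIElt n)) : Prop :=
  B.card = n + 3 ∧ ¬ MIT n ⊆ B ∧ ∀ i : Fin 3, ¬ B ⊆ MIC n i ∧ ¬ B ⊆ MIH n i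

/-!
Every basis has `n + 3 = |Cᵢ|` elements, so a basis containing `Cᵢ` would equal `Cᵢ`, which is
excluded. A proper subset of `Cᵢ` misses some `x ∈ Cᵢ`, and lies in `Cᵢ - x + y` with `y` a point
of the next block `X`/`Y`/`Z`. That set is a basis: `y` keeps it out of `Cᵢ`, and it stays out of
every other `Cⱼ` and every `Hⱼ` because `Cᵢ` has at least two points outside each of them.
-/

theorem Finset.not_erase_subset_of_nontrivial_sdiff {α : Type*} [DecidableEq α]
    {s t : Finset α} (h : (s \ t).Nontrivial) (x : α) : ¬ s.erase x ⊆ t := by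
  obtain ⟨a, ha, b, hb, hab⟩ := h
  rw [mem_coe, mem_sdiff] at ha hb
  intro hst
  by_cases hax : a = x
  · exact hb.2 (hst (mem_erase.2 ⟨fun hbx => hab (hax.trans hbx.symm), hb.1⟩))
  · exact ha.2 (hst (mem_erase.2 ⟨hax, ha.1⟩))

theorem Fin.castSucc_ne_three (i : Fin 3) : i.castSucc ≠ (3 : Fin 4) :=
  Fin.castSucc_ne_last i

section MembershipInMI

variable {n : ℕ}

@[simp]
theorem inl_notMem_MIXYZ (k : Fin 3) (a : Fin 4) : (Sum.inl a : MIElt n) ∉ MIXYZ n k := by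
  simp [MIXYZ]

@[simp]
theorem inr_mem_MIXYZ {k k' : Fin 3} {j : Fin (n + 1)} :
    (Sum.inr (k, j) : MIElt n) ∈ MIXYZ n k' ↔ k = k' := by
  simp [MIXYZ, eq_comm]

@[simp]
theorem inl_mem_MIC {i : Fin 3} {a : Fin 4} :
    (Sum.inl a : MIElt n) ∈ MIC n i ↔ a = i.castSucc ∨ a = 3 := by
  simp [MIC]

@[simp]
theorem inr_mem_MIC {i k : Fin 3} {j : Fin (n + 1)} :
    (Sum.inr (k, j) : MIElt n) ∈ MIC n i ↔ k = i := by
  simp [MIC]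

@[simp]
theorem inl_mem_MIH {i : Fin 3} {a : Fin 4} :
    (Sum.inl a : MIElt n) ∈ MIH n i ↔ a = i.castSucc := by
  simp [MIH]

@[simp]
theorem inr_mem_MIH {i k : Fin 3} {j : Fin (n + 1)} :
    (Sum.inr (k, j) : MIElt n) ∈ MIH n i ↔ k = i + 1 ∨ k = i + 2 := by
  simp [MIH]

end MembershipInMI

theorem card_MIC (n : ℕ) (i : Fin 3) : (MIC n i).card = n + 3 := by
  have hX : (MIXYZ n i).card = n + 1 := by
    rw [MIXYZ, card_image_of_injective _ (fun a b h => by simpa using h), card_univ,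
      Fintype.card_fin]
  rw [MIC, card_insert_of_notMem (by simp [Fin.castSucc_ne_three]),
    card_insert_of_notMem (inl_notMem_MIXYZ _ _), hX]

theorem MIBases.eq_MIC_of_subset {n : ℕ} {i : Fin 3} {B : Finset (MIElt n)} (hB : MIBases n B)
    (hCB : MIC n i ⊆ B) : B = MIC n i :=
  (eq_of_subset_of_card_le hCB (by rw [hB.1, card_MIC])).symm

theorem not_MIT_subset_insert_inr_MIC (n : ℕ) (i : Fin 3) (p : Fin 3 × Fin (n + 1)) :
    ¬ MIT n ⊆ insert (Sum.inr p) (MIC n i) := by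
  intro h
  have : (Sum.inl (i + 1).castSucc : MIElt n) ∈ MIT n := by
    fin_cases i <;> simp [MIT]
  simpa [Fin.castSucc_ne_three] using h this

theorem nontrivial_MIC_sdiff_MIC (n : ℕ) {i j : Fin 3} (hij : i ≠ j) :
    (MIC n i \ MIC n j).Nontrivial :=
  ⟨Sum.inl i.castSucc, by simp [hij, Fin.castSucc_ne_three], Sum.inr (i, 0), by simp [hij],
    by simp⟩

theorem nontrivial_MIC_sdiff_MIH (n : ℕ) (i j : Fin 3) : (MIC n i \ MIH n j).Nontrivial := by
  refine ⟨Sum.inl 3, by simp [(Fin.castSucc_ne_three _).symm], ?_⟩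
  by_cases hij : i = j
  · subst hij
    exact ⟨Sum.inr (i, 0), by simp, by simp⟩
  · exact ⟨Sum.inl i.castSucc, by simp [hij], by simp [(Fin.castSucc_ne_three _).symm]⟩

theorem MIBases_insert_erase_MIC {n : ℕ} {i : Fin 3} {x : MIElt n} (hx : x ∈ MIC n i) :
    MIBases n (insert (Sum.inr (i + 1, 0)) ((MIC n i).erase x)) := by
  have hnew : (Sum.inr (i + 1, 0) : MIElt n) ∉ MIC n i := by simp
  refine ⟨?_, ?_, fun j => ⟨?_, ?_⟩⟩
  · rw [card_insert_of_notMem (fun h => hnew (mem_of_mem_erase h)), card_erase_of_mem hx,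
      card_MIC, Nat.sub_add_cancel (by omega)]
  · exact fun h => not_MIT_subset_insert_inr_MIC n i _
      (h.trans (insert_subset_insert _ (erase_subset _ _)))
  · intro h
    by_cases hij : i = j
    · subst hij
      exact hnew (h (mem_insert_self _ _))
    · exact not_erase_subset_of_nontrivial_sdiff (nontrivial_MIC_sdiff_MIC n hij) x
        ((subset_insert _ _).trans h)
  · exact fun h => not_erase_subset_of_nontrivial_sdiff (nontrivial_MIC_sdiff_MIH n i j) x
      ((subset_insert _ _).trans h)

/-- Each `Cᵢ` is a circuit of `MI_n`: it is contained in no basis, while each of its proper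
subsets is contained in some basis. -/
theorem MI_C_is_circuit (n : ℕ) (i : Fin 3) :
    (¬ ∃ B, MIBases n B ∧ MIC n i ⊆ B) ∧
    (∀ S : Finset (MIElt n), S ⊂ MIC n i → ∃ B, MIBases n B ∧ S ⊆ B) := by
  refine ⟨fun ⟨B, hB, hCB⟩ => (hB.2.2 i).1 (hB.eq_MIC_of_subset hCB).le, fun S hS => ?_⟩
  obtain ⟨x, hxC, hxS⟩ := exists_of_ssubset hS
  exact ⟨_, MIBases_insert_erase_MIC hxC,
    (subset_erase.2 ⟨hS.subset, hxS⟩).trans (subset_insert _ _)⟩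
end

section
/- With the notation of the matroid MI_n: each set Hᵢ (i = 1, 2, 3) is a hyperplane of MI_n, i.e., rank(Hᵢ) = n+2 and rank(Hᵢ ∪ {e}) = n+3 for every e ∈ E_n \ Hᵢ. Consequently each complement Hᵢᶜ = E_n \ Hᵢ is a cocircuit of MI_n. -/
open Finset

/-!
Inside `Hᵢ` the set `Sᵢ = {i} ∪ X_{i+1}` (`MIHBasis n i`) has `n + 2` elements, and `Sᵢ ∪ {e}`
is a basis for every `e ∉ Hᵢ`: it meets `{1,2,3}` in at most two points, it contains `i`, which
lies in no `Cⱼ` or `Hⱼ` with `j ≠ i`, it is not inside `Cᵢ` because of `X_{i+1}`, and not inside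
`Hᵢ` because of `e`. Conversely an independent subset of `Hᵢ` lies in a basis `B ⊄ Hᵢ`, so it is
a proper subset of `B`.
-/

namespace MI

variable {n : ℕ}

lemma fin3_add_one_ne (i : Fin 3) : i + 1 ≠ i := by revert i; decide

lemma fin3_add_two_ne (i : Fin 3) : i + 2 ≠ i := by revert i; decide

@[simp] lemma inl_notMem_MIXYZ (k : Fin 3) (a : Fin 4) : (Sum.inl a : MIElt n) ∉ MIXYZ n k := by
  simp [MIXYZ]

@[simp] lemma inr_mem_MIXYZ {k k' : Fin 3} {x : Fin (n + 1)} :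
    (Sum.inr (k, x) : MIElt n) ∈ MIXYZ n k' ↔ k = k' := by
  simp [MIXYZ, eq_comm]

lemma card_MIXYZ (k : Fin 3) : (MIXYZ n k).card = n + 1 := by
  rw [MIXYZ, card_image_of_injective _ fun a b h => by simpa using h, card_univ, Fintype.card_fin]

@[simp] lemma inl_castSucc_mem_MIH {i j : Fin 3} :
    (Sum.inl i.castSucc : MIElt n) ∈ MIH n j ↔ i = j := by
  simp [MIH]

@[simp] lemma inl_castSucc_mem_MIC {i j : Fin 3} :
    (Sum.inl i.castSucc : MIElt n) ∈ MIC n j ↔ i = j := by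
  have : i.castSucc ≠ (3 : Fin 4) := by revert i; decide
  simp [MIC, this]

lemma inl_three_notMem_MIH (i : Fin 3) : (Sum.inl 3 : MIElt n) ∉ MIH n i := by
  revert i; simp [MIH]; decide

lemma inl_castSucc_mem_MIT (i : Fin 3) : (Sum.inl i.castSucc : MIElt n) ∈ MIT n := by
  revert i; simp [MIT]; decide

def MIHBasis (n : ℕ) (i : Fin 3) : Finset (MIElt n) :=
  insert (Sum.inl i.castSucc) (MIXYZ n (i + 1))

lemma MIHBasis_subset_MIH (i : Fin 3) : MIHBasis n i ⊆ MIH n i :=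
  insert_subset_insert _ subset_union_left

lemma card_MIHBasis (i : Fin 3) : (MIHBasis n i).card = n + 2 := by
  rw [MIHBasis, card_insert_of_notMem (inl_notMem_MIXYZ _ _), card_MIXYZ]

lemma card_insert_MIHBasis {i : Fin 3} {e : MIElt n} (he : e ∉ MIH n i) :
    (insert e (MIHBasis n i)).card = n + 3 := by
  rw [card_insert_of_notMem fun h => he (MIHBasis_subset_MIH i h), card_MIHBasis]

lemma MIBases_insert_MIHBasis {i : Fin 3} {e : MIElt n} (he : e ∉ MIH n i) :
    MIBases n (insert e (MIHBasis n i)) := by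
  have hi : (Sum.inl i.castSucc : MIElt n) ∈ insert e (MIHBasis n i) :=
    mem_insert_of_mem (mem_insert_self _ _)
  refine ⟨card_insert_MIHBasis he, fun hT => ?_, fun j => ?_⟩
  · have hother : ∀ j : Fin 3, j ≠ i → Sum.inl j.castSucc = e := fun j hj => by
      simpa [MIHBasis, hj] using hT (inl_castSucc_mem_MIT j)
    have h12 := (hother _ (fin3_add_one_ne i)).trans (hother _ (fin3_add_two_ne i)).symm
    simp at h12
  · by_cases hji : j = i
    · subst hji
      refine ⟨fun h => ?_, fun h => he (h (mem_insert_self _ _))⟩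
      have hX : (Sum.inr (j + 1, 0) : MIElt n) ∈ insert e (MIHBasis n j) :=
        mem_insert_of_mem (mem_insert_of_mem (inr_mem_MIXYZ.2 rfl))
      simpa [MIC, fin3_add_one_ne] using h hX
    · exact ⟨fun h => hji (inl_castSucc_mem_MIC.1 (h hi)).symm,
        fun h => hji (inl_castSucc_mem_MIH.1 (h hi)).symm⟩

lemma card_le_of_subset_MIH_of_subset_MIBases {i : Fin 3} {I B : Finset (MIElt n)}
    (hIH : I ⊆ MIH n i) (hB : MIBases n B) (hIB : I ⊆ B) : I.card ≤ n + 2 := by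
  have hIB' : I ⊂ B := ssubset_of_subset_of_ne hIB (by rintro rfl; exact (hB.2.2 i).2 hIH)
  have := card_lt_card hIB'
  rw [hB.1] at this
  omega

end MI

open MI in
/-- Each `Hᵢ` is a hyperplane of `MI_n`: its rank (the largest size of an independent subset)
is `n + 2`, while adjoining any element outside `Hᵢ` produces a set of full rank `n + 3`. -/
theorem MI_H_is_hyperplane (n : ℕ) (i : Fin 3) :
    ((∃ I : Finset (MIElt n), I ⊆ MIH n i ∧ (∃ B, MIBases n B ∧ I ⊆ B) ∧ I.card = n + 2) ∧
      (∀ I : Finset (MIElt n), I ⊆ MIH n i → (∃ B, MIBases n B ∧ I ⊆ B) → I.card ≤ n + 2)) ∧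
    (∀ e : MIElt n, e ∉ MIH n i →
      ∃ I : Finset (MIElt n), I ⊆ insert e (MIH n i) ∧ (∃ B, MIBases n B ∧ I ⊆ B) ∧
        I.card = n + 3) := by
  refine ⟨⟨⟨MIHBasis n i, MIHBasis_subset_MIH i, ?_, card_MIHBasis i⟩, ?_⟩, fun e he => ?_⟩
  · exact ⟨_, MIBases_insert_MIHBasis (inl_three_notMem_MIH i), subset_insert _ _⟩
  · rintro I hIH ⟨B, hB, hIB⟩
    exact card_le_of_subset_MIH_of_subset_MIBases hIH hB hIB
  · exact ⟨insert e (MIHBasis n i), insert_subset_insert _ (MIHBasis_subset_MIH i),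
      ⟨_, MIBases_insert_MIHBasis he, Subset.rfl⟩, card_insert_MIHBasis he⟩
end
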